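/- arXiv:1905.12046 — 4 statements merged into one kernel-verified Lean document; each statement's English description precedes it below -/
import Mathlib

section
/- Let k ≥ 1 be an integer, let p, q ∈ ℂ with p + q = 1, let x ∈ ℤ and t ∈ ℂ, and let ξ_1, …, ξ_k ∈ ℂ be pairwise distinct and satisfy: ξ_i ≠ 0, ξ_i ≠ 1, qξ_i ≠ p, and p + qξ_iξ_j - ξ_i ≠ 0 for all i, j. Define ε(ξ) = pξ^{-1} + qξ - 1, U(ζ,ζ') = (p + qζζ' - ζ)/(ζ' - ζ), and K_x(ξ,ξ') = ξ^x e^{ε(ξ)t}/(p + qξξ' - ξ). Then det( K_x(ξ_i,ξ_j) )_{i,j=1}^{k} = (-1)^k (pq)^{k(k-1)/2} ∏_{i≠j} U(ξ_i,ξ_j)^{-1} · ∏_{i=1}^{k} ((1-ξ_i)(qξ_i - p))^{-1} · ∏_{i=1}^{k} ξ_i^x e^{ε(ξ_i)t}. -/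
/-!
With `a i = p - ξ i` and `b i = q * ξ i` the denominators are `a i + b i * ξ j`, so up to the row
factors `ξ i ^ x * exp (ε (ξ i) * t)` the matrix is a generalised Cauchy matrix
`((a i + b i * c j)⁻¹)`, whose determinant is
`∏_{i<j} (a j b i - a i b j)(c j - c i) / ∏_{i,j} (a i + b i c j)` because
the Schur complement of the `(0,0)` entry is again such a matrix, rescaled by rows and columns.
Here `a j b i - a i b j = pq (ξ i - ξ j)` gives the factor `(pq)^(k(k-1)/2)`, and since `p + q = 1`
the diagonal denominators are `p + q ξ i ^ 2 - ξ i = -(1 - ξ i)(q ξ i - p)`.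
-/

open Finset

theorem Finset.prod_prod_ite_ne_eq_prod_prod_Ioi {ι M : Type*} [CommMonoid M] [LinearOrder ι]
    [Fintype ι] [LocallyFiniteOrderTop ι] (g : ι → ι → M) :
    ∏ i, ∏ j, (if i ≠ j then g i j else 1) = ∏ i, ∏ j ∈ Ioi i, g i j * g j i := by
  have hsplit : ∀ i j, (if i ≠ j then g i j else 1) =
      (if i < j then g i j else 1) * (if j < i then g i j else 1) := by
    intro i j
    rcases lt_trichotomy i j with hij | rfl | hij
    · simp [hij, hij.ne, hij.not_gt]
    · simp
    · simp [hij, hij.ne', hij.not_gt]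
  simp only [hsplit, prod_mul_distrib]
  rw [prod_comm (s := univ) (f := fun i j => if j < i then g i j else 1)]
  simp only [← prod_filter, filter_lt_eq_Ioi]

theorem Finset.prod_prod_eq_prod_prod_ite_ne_mul {ι M : Type*} [CommMonoid M] [Fintype ι]
    [DecidableEq ι] (f : ι → ι → M) :
    ∏ i, ∏ j, f i j = (∏ i, ∏ j, if i ≠ j then f i j else 1) * ∏ i, f i i := by
  rw [← prod_mul_distrib]
  refine prod_congr rfl fun i _ => ?_
  rw [← prod_filter, filter_ne, mul_comm, mul_prod_erase _ _ (mem_univ i)]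

theorem Fin.prod_prod_Ioi_const {M : Type*} [CommMonoid M] (n : ℕ) (c : M) :
    ∏ i : Fin n, ∏ _j ∈ Ioi i, c = c ^ n.choose 2 := by
  induction n with
  | zero => simp
  | succ n ih =>
    rw [Fin.prod_univ_succ, Fin.prod_Ioi_zero]
    simp only [Fin.prod_Ioi_succ, ih, prod_const,
      Nat.choose_succ_succ, Nat.choose_one_right, pow_add]

theorem Matrix.det_succ_eq_mul_det_schur {K : Type*} [Field K] {n : ℕ}
    (A : Matrix (Fin (n + 1)) (Fin (n + 1)) K) (h : A 0 0 ≠ 0) :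
    A.det = A 0 0 * (Matrix.of fun i j : Fin n =>
      A i.succ j.succ - A i.succ 0 * A 0 j.succ / A 0 0).det := by
  let c : Fin (n + 1) → K := Fin.cases 0 fun i => A i.succ 0 / A 0 0
  let B : Matrix (Fin (n + 1)) (Fin (n + 1)) K := of fun i j => A i j - c i * A 0 j
  have hB0 : ∀ j, B 0 j = A 0 j := by simp [B, c]
  rw [det_eq_of_forall_row_eq_smul_add_const (B := B) c 0 rfl (fun i j => by simp [B, hB0]),
    det_succ_column_zero, Fin.sum_univ_succ, Finset.sum_eq_zero fun i _ => ?_]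
  · simp only [Fin.val_zero, pow_zero, one_mul, hB0, Fin.succAbove_zero, add_zero]
    congr 2
    ext i j
    simp [B, c]
    ring
  · simp [B, c, h]

theorem Matrix.det_of_inv_add_mul {K : Type*} [Field K] {n : ℕ} (a b c : Fin n → K)
    (h : ∀ i j, a i + b i * c j ≠ 0) :
    (Matrix.of fun i j => (a i + b i * c j)⁻¹).det =
      (∏ i, ∏ j ∈ Ioi i, (a j * b i - a i * b j) * (c j - c i)) /
        ∏ i, ∏ j, (a i + b i * c j) := by
  induction n with
  | zero => simp
  | succ n ih =>
    have schur_entry {x y z w r s : K} (hx : x ≠ 0) (hy : y ≠ 0) (hz : z ≠ 0)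
        (hrs : y * z - w * x = r * s) : x⁻¹ - y⁻¹ * z⁻¹ / w⁻¹ = r / y * (s / z * x⁻¹) := by
      field_simp
      linear_combination hrs
    let u (i : Fin n) : K := (a i.succ * b 0 - a 0 * b i.succ) / (a i.succ + b i.succ * c 0)
    let v (j : Fin n) : K := (c j.succ - c 0) / (a 0 + b 0 * c j.succ)
    have hschur : (Matrix.of fun i j : Fin n =>
        (a i.succ + b i.succ * c j.succ)⁻¹ -
          (a i.succ + b i.succ * c 0)⁻¹ * (a 0 + b 0 * c j.succ)⁻¹ / (a 0 + b 0 * c 0)⁻¹) =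
        Matrix.of fun i j => u i *
          (Matrix.of fun i j => v j *
            (Matrix.of fun i j => (a i.succ + b i.succ * c j.succ)⁻¹) i j) i j := by
      ext i j
      simp only [of_apply, u, v]
      exact schur_entry (h _ _) (h _ _) (h _ _) (by ring)
    rw [det_succ_eq_mul_det_schur _ (by simpa using h 0 0)]
    simp only [of_apply]
    rw [hschur, det_mul_column, det_mul_row, ih _ _ _ fun i j => h _ _]
    simp only [Fin.prod_univ_succ, Fin.prod_Ioi_zero, Fin.prod_Ioi_succ, u, v, prod_div_distrib,
      prod_mul_distrib]
    field_simp [prod_ne_zero_iff, h]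

theorem det_of_inv_p_add_q_mul_mul_sub {K : Type*} [Field K] {n : ℕ} (p q : K)
    (hpq : p + q = 1) (ξ : Fin n → K) (h : ∀ i j, p + q * ξ i * ξ j - ξ i ≠ 0) :
    (Matrix.of fun i j => (p + q * ξ i * ξ j - ξ i)⁻¹).det =
      (-1) ^ n * (p * q) ^ (n * (n - 1) / 2) * (∏ i, ∏ j, if i ≠ j then ξ j - ξ i else 1) /
        ((∏ i, ∏ j, if i ≠ j then p + q * ξ i * ξ j - ξ i else 1) *
          ∏ i, (1 - ξ i) * (q * ξ i - p)) := by
  have hcauchy_form : ∀ i j, p + q * ξ i * ξ j - ξ i = (p - ξ i) + q * ξ i * ξ j :=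
    fun i j => by ring
  have hnum : ∀ i j, ((p - ξ j) * (q * ξ i) - (p - ξ i) * (q * ξ j)) * (ξ j - ξ i) =
      p * q * ((ξ j - ξ i) * (ξ i - ξ j)) := fun i j => by ring
  have hdiag : ∀ i, p + q * ξ i * ξ i - ξ i = -((1 - ξ i) * (q * ξ i - p)) := fun i => by
    linear_combination ξ i * hpq
  rw [show (Matrix.of fun i j => (p + q * ξ i * ξ j - ξ i)⁻¹) =
      Matrix.of fun i j => ((p - ξ i) + q * ξ i * ξ j)⁻¹ by simp only [hcauchy_form],
    Matrix.det_of_inv_add_mul _ _ _ fun i j => hcauchy_form i j ▸ h i j,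
    prod_prod_ite_ne_eq_prod_prod_Ioi fun i j => ξ j - ξ i]
  simp only [hnum, prod_mul_distrib, Fin.prod_prod_Ioi_const, Nat.choose_two_right,
    ← hcauchy_form]
  rw [prod_prod_eq_prod_prod_ite_ne_mul fun i j => p + q * ξ i * ξ j - ξ i]
  simp only [hdiag, prod_neg, card_univ, Fintype.card_fin, prod_mul_distrib, div_eq_mul_inv,
    mul_inv, ← inv_pow, inv_neg_one]
  ring

theorem det_Kx_kernel_general (k : ℕ) (p q : ℂ) (hpq : p + q = 1)
    (x : ℤ) (t : ℂ) (ξ : Fin k → ℂ)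
    (h3 : ∀ i j, p + q * ξ i * ξ j - ξ i ≠ 0) :
    Matrix.det (Matrix.of fun i j : Fin k =>
        ξ i ^ x * Complex.exp ((p * (ξ i)⁻¹ + q * ξ i - 1) * t) /
          (p + q * ξ i * ξ j - ξ i)) =
      (-1) ^ k * (p * q) ^ (k * (k - 1) / 2) *
        (∏ i : Fin k, ∏ j : Fin k,
          if i ≠ j then ((p + q * ξ i * ξ j - ξ i) / (ξ j - ξ i))⁻¹ else 1) *
        (∏ i : Fin k, ((1 - ξ i) * (q * ξ i - p))⁻¹) *
        ∏ i : Fin k, ξ i ^ x * Complex.exp ((p * (ξ i)⁻¹ + q * ξ i - 1) * t) := by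
  have hfactor : (Matrix.of fun i j : Fin k =>
      ξ i ^ x * Complex.exp ((p * (ξ i)⁻¹ + q * ξ i - 1) * t) / (p + q * ξ i * ξ j - ξ i)) =
      Matrix.of fun i j => ξ i ^ x * Complex.exp ((p * (ξ i)⁻¹ + q * ξ i - 1) * t) *
        (Matrix.of fun i j => (p + q * ξ i * ξ j - ξ i)⁻¹) i j := by
    ext i j
    simp [div_eq_mul_inv]
  have hU : ∀ i j, (if i ≠ j then ((p + q * ξ i * ξ j - ξ i) / (ξ j - ξ i))⁻¹ else 1) =
      (if i ≠ j then ξ j - ξ i else 1) * (if i ≠ j then p + q * ξ i * ξ j - ξ i else 1)⁻¹ :=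
    fun i j => by split_ifs <;> simp [div_eq_mul_inv]
  rw [hfactor, Matrix.det_mul_column, det_of_inv_p_add_q_mul_mul_sub p q hpq ξ h3]
  simp only [hU, prod_mul_distrib, prod_inv_distrib]
  ring

/-- Determinant identity for the ASEP kernel `K_x(ξ,ξ') = ξ^x e^{ε(ξ)t}/(p + qξξ' - ξ)`,
where `ε(ξ) = pξ⁻¹ + qξ - 1` and `U(ζ,ζ') = (p + qζζ' - ζ)/(ζ' - ζ)`:
`det(K_x(ξ_i,ξ_j)) = (-1)^k (pq)^{k(k-1)/2} ∏_{i≠j} U(ξ_i,ξ_j)⁻¹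
· ∏_i ((1-ξ_i)(qξ_i-p))⁻¹ · ∏_i ξ_i^x e^{ε(ξ_i)t}`. -/
theorem det_Kx_kernel (k : ℕ) (hk : 1 ≤ k) (p q : ℂ) (hpq : p + q = 1)
    (x : ℤ) (t : ℂ) (ξ : Fin k → ℂ) (hdist : Function.Injective ξ)
    (h0 : ∀ i, ξ i ≠ 0) (h1 : ∀ i, ξ i ≠ 1) (h2 : ∀ i, q * ξ i ≠ p)
    (h3 : ∀ i j, p + q * ξ i * ξ j - ξ i ≠ 0) :
    Matrix.det (Matrix.of fun i j : Fin k =>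
        ξ i ^ x * Complex.exp ((p * (ξ i)⁻¹ + q * ξ i - 1) * t) /
          (p + q * ξ i * ξ j - ξ i)) =
      (-1) ^ k * (p * q) ^ (k * (k - 1) / 2) *
        (∏ i : Fin k, ∏ j : Fin k,
          if i ≠ j then ((p + q * ξ i * ξ j - ξ i) / (ξ j - ξ i))⁻¹ else 1) *
        (∏ i : Fin k, ((1 - ξ i) * (q * ξ i - p))⁻¹) *
        ∏ i : Fin k, ξ i ^ x * Complex.exp ((p * (ξ i)⁻¹ + q * ξ i - 1) * t) :=
  det_Kx_kernel_general k p q hpq x t ξ h3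
end

section
/- For every real c > 0 and every real s, (1/2π) ∫_{-∞}^{∞} exp( (c+iy)²/2 - s(c+iy) ) / (c+iy) dy = 1 - G(s). Equivalently, the contour integral (1/2πi) ∫ e^{η²/2 - sη} dη/η along the vertical line Re η = c > 0, taken upward, equals 1 - G(s). -/
/-!
Write `η = c + iy`. Since `Re η = c > 0`, `1/η = ∫₀^∞ e^{-tη} dt`, so the integrand becomes
`∫₀^∞ e^{η²/2 - (s+t)η} dt`, which is absolutely integrable in `(y, t)` because
`|e^{η²/2 - (s+t)η}| = e^{c²/2 - sc} e^{-y²/2} e^{-ct}`. After Fubini, the `y`-integral is a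
Gaussian integral along a line parallel to the real axis: `∫ e^{η²/2 - aη} dy = √(2π) e^{-a²/2}`.
What remains is `(1/√(2π)) ∫₀^∞ e^{-(s+t)²/2} dt = 1 - G(s)`.
-/

open MeasureTheory Set Complex Real

lemma integral_Ioi_cexp_neg_mul {w : ℂ} (hw : 0 < w.re) :
    ∫ t in Ioi (0 : ℝ), cexp (-w * t) = w⁻¹ := by
  simpa [neg_div] using integral_exp_mul_complex_Ioi (a := -w) (by simpa using hw) 0

lemma integral_Ioi_comp_add_left {E : Type*} [NormedAddCommGroup E] [NormedSpace ℝ E]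
    (f : ℝ → E) (s : ℝ) : ∫ t in Ioi (0 : ℝ), f (s + t) = ∫ u in Ioi s, f u := by
  have := (measurePreserving_add_right volume s).setIntegral_preimage_emb
    (measurableEmbedding_addRight s) f (Ioi s)
  rw [show (· + s) ⁻¹' Ioi s = Ioi 0 by ext; simp] at this
  simpa only [add_comm s] using this

lemma integral_exp_neg_sq_div_two : ∫ x : ℝ, rexp (-x ^ 2 / 2) = √(2 * π) := by
  simpa [neg_div, div_eq_inv_mul, div_inv_eq_mul, mul_comm] using integral_gaussian (1 / 2)

lemma integrable_exp_neg_sq_div_two : Integrable fun x : ℝ => rexp (-x ^ 2 / 2) := by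
  simpa [neg_div, div_eq_inv_mul] using integrable_exp_neg_mul_sq (b := 1 / 2) (by norm_num)

lemma integral_Ioi_exp_neg_sq_div_two (s : ℝ) :
    ∫ u in Ioi s, rexp (-u ^ 2 / 2) = √(2 * π) - ∫ z in Iic s, rexp (-z ^ 2 / 2) := by
  rw [← integral_exp_neg_sq_div_two, ← intervalIntegral.integral_Iic_add_Ioi
    integrable_exp_neg_sq_div_two.integrableOn integrable_exp_neg_sq_div_two.integrableOn]
  ring

lemma integral_cexp_sq_div_two_sub_mul_vertical (c : ℝ) (a : ℂ) :
    ∫ y : ℝ, cexp ((c + y * I) ^ 2 / 2 - a * (c + y * I)) = √(2 * π) * cexp (-a ^ 2 / 2) := by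
  have hquad (y : ℝ) : (c + y * I) ^ 2 / 2 - a * (c + y * I) =
      -(1 / 2) * y ^ 2 + (c - a) * I * y + (c ^ 2 / 2 - a * c) := by
    linear_combination (y ^ 2 / 2 : ℂ) * I_sq
  simp_rw [hquad]
  rw [integral_cexp_quadratic (by norm_num)]
  congr 1
  · rw [show (π : ℂ) / -(-(1 / 2)) = ((2 * π : ℝ) : ℂ) by push_cast; ring,
      ← ofReal_ofNat, ← ofReal_one, ← ofReal_div, ← ofReal_cpow (by positivity), sqrt_eq_rpow]
  · congr 1
    linear_combination ((c - a) ^ 2 / 2 : ℂ) * I_sq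

lemma integrable_prod_cexp_sq_div_two_sub_add_mul {c : ℝ} (hc : 0 < c) (s : ℝ) :
    Integrable (fun p : ℝ × ℝ => cexp ((c + p.1 * I) ^ 2 / 2 - (s + p.2) * (c + p.1 * I)))
      (volume.prod (volume.restrict (Ioi 0))) := by
  have hdom : Integrable
      (fun p : ℝ × ℝ => rexp (c ^ 2 / 2 - s * c) * rexp (-p.1 ^ 2 / 2) * rexp (-c * p.2))
      (volume.prod (volume.restrict (Ioi 0))) :=
    (integrable_exp_neg_sq_div_two.const_mul _).mul_prod (exp_neg_integrableOn_Ioi 0 hc)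
  refine hdom.mono' (by fun_prop) (ae_of_all _ fun ⟨y, t⟩ => le_of_eq ?_)
  rw [norm_exp, ← Real.exp_add, ← Real.exp_add]
  congr 1
  simp only [sq, sub_re, div_ofNat_re, mul_re, add_re, ofReal_re, I_re, mul_zero, ofReal_im, I_im,
    mul_one, sub_self, add_zero, add_im, mul_im, zero_add, zero_mul, sub_zero, neg_mul]
  ring

/-- For all real `c > 0` and real `s`,
`(1/2π) ∫_{-∞}^{∞} exp((c+iy)²/2 - s(c+iy))/(c+iy) dy = 1 - G(s)`, where
`G(s) = (1/√(2π)) ∫_{-∞}^{s} e^{-z²/2} dz` is the standard normal distribution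
function; i.e. the contour integral `(1/2πi) ∫ e^{η²/2 - sη} dη/η` along the vertical
line `Re η = c > 0`, taken upward, equals `1 - G(s)`. -/
theorem gaussian_vertical_line_integral_pole (c s : ℝ) (hc : 0 < c) :
    (1 / (2 * Real.pi) : ℂ) *
        ∫ y : ℝ, Complex.exp ((c + y * Complex.I) ^ 2 / 2 - s * (c + y * Complex.I)) /
          (c + y * Complex.I) =
      1 - (((Real.sqrt (2 * Real.pi))⁻¹ * ∫ z in Set.Iic s, Real.exp (-z ^ 2 / 2) : ℝ) : ℂ) := by
  have laplace (y : ℝ) : cexp ((c + y * I) ^ 2 / 2 - s * (c + y * I)) / (c + y * I) =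
      ∫ t in Ioi (0 : ℝ), cexp ((c + y * I) ^ 2 / 2 - (s + t) * (c + y * I)) := by
    rw [div_eq_mul_inv, ← integral_Ioi_cexp_neg_mul (by simpa using hc), ← integral_const_mul]
    refine setIntegral_congr_fun measurableSet_Ioi fun t _ => ?_
    rw [← Complex.exp_add]
    congr 1
    ring
  have tail : ∫ t in Ioi (0 : ℝ), cexp (-((s + t : ℝ) : ℂ) ^ 2 / 2) =
      ((√(2 * π) - ∫ z in Iic s, rexp (-z ^ 2 / 2) : ℝ) : ℂ) := by
    rw [← integral_Ioi_exp_neg_sq_div_two,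
      ← integral_Ioi_comp_add_left (fun u => rexp (-u ^ 2 / 2)), ← integral_complex_ofReal]
    push_cast
    rfl
  simp_rw [laplace]
  rw [integral_integral_swap (integrable_prod_cexp_sq_div_two_sub_add_mul hc s)]
  simp_rw [← ofReal_add, integral_cexp_sq_div_two_sub_mul_vertical, integral_const_mul]
  rw [tail]
  have hsqrt : (√(2 * π) : ℂ) ^ 2 = 2 * π := by exact_mod_cast sq_sqrt (by positivity)
  have hne : (√(2 * π) : ℂ) ≠ 0 := by exact_mod_cast (sqrt_pos.2 (by positivity)).ne'
  push_cast
  rw [← hsqrt]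
  field_simp
end

section
/- Let N ≥ 1 and k ≥ 1 be integers, let S = {s_1 < s_2 < ⋯ < s_k} be a subset of {1, 2, …, N}, set s_0 = 0 and t_i = s_i - s_{i-1} - 1 for i = 1, …, k, and let ρ, τ ∈ ℂ. Then ∑_{Y : S ⊆ Y ⊆ {1,…,N}} ρ^{|Y|} (1-ρ)^{N-|Y|} τ^{σ(S,Y)} = τ^{k(k+1)/2} ρ^k ∏_{i=1}^{k} (1 - ρ + τ^{k-i+1}ρ)^{t_i}. -/
/-!
Writing `σ(S, Y) = ∑_{v ∈ Y} w v` with `w v = #{u ∈ S | v ≤ u}`, the summand factors as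
`∏_{v ∈ Y} ρ τ^(w v) · ∏_{v ∉ Y} (1 - ρ)`, so the sum over `S ⊆ Y ⊆ [1, N]` is
`∏_{v ∈ S} ρ τ^(w v) · ∏_{v ∉ S} (ρ τ^(w v) + 1 - ρ)`. Finally `w` equals `k - i + 1`
on `(s_{i-1}, s_i]` and vanishes beyond `s_k`, where the factor is `1`.
-/

open Finset

namespace Finset

variable {α R : Type*}

theorem card_filter_le_product_eq_sum [LinearOrder α] (S Y : Finset α) :
    #{p ∈ S ×ˢ Y | p.2 ≤ p.1} = ∑ v ∈ Y, #{u ∈ S | v ≤ u} := by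
  simp only [card_filter, sum_product_right]

theorem sum_Icc_prod_mul_prod_sdiff [DecidableEq α] [CommSemiring R] {S U : Finset α}
    (hSU : S ⊆ U) (f g : α → R) :
    ∑ Y ∈ Icc S U, (∏ v ∈ Y, f v) * ∏ v ∈ U \ Y, g v =
      (∏ v ∈ S, f v) * ∏ v ∈ U \ S, (f v + g v) := by
  have hdisj {T : Finset α} (hT : T ∈ (U \ S).powerset) : Disjoint S T :=
    disjoint_sdiff.mono_right (mem_powerset.1 hT)
  rw [Icc_eq_image_powerset hSU, sum_image, prod_add, mul_sum]
  · refine sum_congr rfl fun T hT => ?_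
    rw [prod_union (hdisj hT), sdiff_sdiff_left, mul_assoc]
    rfl
  · intro T hT T' hT' h
    rw [← union_sdiff_cancel_left (hdisj hT), ← union_sdiff_cancel_left (hdisj hT')]
    exact congrArg (· \ S) h

theorem pow_card_mul_pow_card_sdiff_mul_pow_sum [CommMonoid R] [DecidableEq α]
    {U Y : Finset α} (hYU : Y ⊆ U) (a b c : R) (w : α → ℕ) :
    a ^ #Y * b ^ (#U - #Y) * c ^ ∑ v ∈ Y, w v =
      (∏ v ∈ Y, a * c ^ w v) * ∏ _v ∈ U \ Y, b := by
  rw [prod_mul_distrib, prod_const, prod_const, prod_pow_eq_pow_sum, card_sdiff_of_subset hYU]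
  exact mul_right_comm _ _ _

theorem sum_Icc_sub_add_one (k : ℕ) : ∑ i ∈ Icc 1 k, (k - i + 1) = k * (k + 1) / 2 := by
  have hreflect : ∑ i ∈ Icc 1 k, (k - i + 1) = ∑ j ∈ range (k + 1), j := by
    rw [sum_range_succ', add_zero]
    exact sum_nbij' (k - ·) (k - ·) (by intro; simp; omega) (by intro; simp; omega)
      (by intro; simp; omega) (by intro; simp; omega) (by intro; simp)
  rw [hreflect, sum_range_id, Nat.add_sub_cancel, Nat.mul_comm]

theorem prod_Ioc_eq_prod_Icc_prod_Ioc [CommMonoid R] {s : ℕ → ℕ} {n : ℕ}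
    (hs : MonotoneOn s (Set.Iic n)) (f : ℕ → R) :
    ∏ j ∈ Ioc (s 0) (s n), f j = ∏ i ∈ Icc 1 n, ∏ j ∈ Ioc (s (i - 1)) (s i), f j := by
  induction n with
  | zero => simp
  | succ n ih =>
    have hmono {a b : ℕ} (hab : a ≤ b) (hb : b ≤ n + 1) : s a ≤ s b :=
      hs (Set.mem_Iic.2 (hab.trans hb)) (Set.mem_Iic.2 hb) hab
    rw [prod_Icc_succ_top (by omega), ← prod_Ioc_consecutive f (hmono n.zero_le n.le_succ)
      (hmono n.le_succ le_rfl), ih (hs.mono (Set.Iic_subset_Iic.2 n.le_succ)),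
      Nat.add_sub_cancel]

end Finset

section StrictMonoOnIic

variable {R : Type*} {s : ℕ → ℕ} {k i j : ℕ}

theorem apply_sub_one_lt_apply (hs : StrictMonoOn s (Set.Iic k)) (hi : i ∈ Icc 1 k) :
    s (i - 1) < s i := by
  rw [mem_Icc] at hi
  exact hs (Set.mem_Iic.2 (by omega)) (Set.mem_Iic.2 hi.2) (by omega)

theorem filter_Icc_le_apply_eq_Icc (hs : MonotoneOn s (Set.Iic k)) (hi : i ∈ Icc 1 k)
    (hj : j ∈ Ioc (s (i - 1)) (s i)) : {m ∈ Icc 1 k | j ≤ s m} = Icc i k := by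
  rw [mem_Icc] at hi
  rw [mem_Ioc] at hj
  ext m
  simp only [mem_filter, mem_Icc]
  constructor
  · rintro ⟨⟨-, hmk⟩, hjm⟩
    refine ⟨?_, hmk⟩
    by_contra! hmi
    have := hs (Set.mem_Iic.2 hmk) (Set.mem_Iic.2 (by omega)) (Nat.le_sub_one_of_lt hmi)
    omega
  · rintro ⟨him, hmk⟩
    exact ⟨⟨by omega, hmk⟩, hj.2.trans (hs (Set.mem_Iic.2 hi.2) (Set.mem_Iic.2 hmk) him)⟩

theorem card_filter_image_le_of_mem_Ioc (hs : StrictMonoOn s (Set.Iic k)) (hi : i ∈ Icc 1 k)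
    (hj : j ∈ Ioc (s (i - 1)) (s i)) : #{u ∈ (Icc 1 k).image s | j ≤ u} = k - i + 1 := by
  have hinj : Set.InjOn s ↑{m ∈ Icc 1 k | j ≤ s m} :=
    hs.injOn.mono fun m hm => Set.mem_Iic.2 (mem_Icc.1 (mem_filter.1 hm).1).2
  rw [filter_image, card_image_of_injOn hinj, filter_Icc_le_apply_eq_Icc hs.monotoneOn hi hj,
    Nat.card_Icc]
  have := mem_Icc.1 hi
  omega

theorem filter_image_le_eq_empty_of_lt (hs : MonotoneOn s (Set.Iic k)) (hj : s k < j) :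
    {u ∈ (Icc 1 k).image s | j ≤ u} = ∅ := by
  refine filter_eq_empty_iff.2 fun u hu hju => ?_
  obtain ⟨m, hm, rfl⟩ := mem_image.1 hu
  have := hs (Set.mem_Iic.2 (mem_Icc.1 hm).2) (Set.mem_Iic.2 le_rfl) (mem_Icc.1 hm).2
  omega

theorem prod_image_mul_pow_card_filter_le [CommMonoid R] (hs : StrictMonoOn s (Set.Iic k))
    (a b : R) :
    ∏ v ∈ (Icc 1 k).image s, a * b ^ #{u ∈ (Icc 1 k).image s | v ≤ u} =
      b ^ (k * (k + 1) / 2) * a ^ k := by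
  have hinj : Set.InjOn s ↑(Icc 1 k) := hs.injOn.mono fun m hm => Set.mem_Iic.2 (mem_Icc.1 hm).2
  have hexp : ∀ i ∈ Icc 1 k,
      a * b ^ #{u ∈ (Icc 1 k).image s | s i ≤ u} = a * b ^ (k - i + 1) := fun i hi => by
      rw [card_filter_image_le_of_mem_Ioc hs hi (right_mem_Ioc.2 (apply_sub_one_lt_apply hs hi))]
  rw [prod_image hinj, prod_congr rfl hexp, prod_mul_distrib, prod_const, Nat.card_Icc,
    Nat.add_sub_cancel, prod_pow_eq_pow_sum, sum_Icc_sub_add_one, mul_comm]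

theorem prod_Icc_sdiff_image_eq_prod_pow [CommMonoid R] {N : ℕ}
    (hs : StrictMonoOn s (Set.Iic k)) (hs0 : s 0 = 0) (hkN : s k ≤ N) {F c : ℕ → R}
    (hF : ∀ i ∈ Icc 1 k, ∀ j ∈ Ioo (s (i - 1)) (s i), F j = c i)
    (hF1 : ∀ j, s k < j → F j = 1) :
    ∏ j ∈ Icc 1 N \ (Icc 1 k).image s, F j =
      ∏ i ∈ Icc 1 k, c i ^ (s i - s (i - 1) - 1) := by
  set S := (Icc 1 k).image s
  have hblock : ∀ i ∈ Icc 1 k, ∏ j ∈ Ioc (s (i - 1)) (s i), (if j ∉ S then F j else 1) =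
      c i ^ (s i - s (i - 1) - 1) := by
    intro i hi
    have hgap : ∀ j ∈ Ioo (s (i - 1)) (s i), j ∉ S := by
      intro j hj hjS
      obtain ⟨m, hm, rfl⟩ := mem_image.1 hjS
      rw [mem_Icc] at hi hm
      rw [mem_Ioo, hs.lt_iff_lt (Set.mem_Iic.2 (by omega)) (Set.mem_Iic.2 hm.2),
        hs.lt_iff_lt (Set.mem_Iic.2 hm.2) (Set.mem_Iic.2 hi.2)] at hj
      omega
    rw [← Ioo_insert_right (apply_sub_one_lt_apply hs hi), prod_insert right_notMem_Ioo,
      if_neg (not_not.2 (mem_image_of_mem s hi)), one_mul, ← Nat.card_Ioo, ← prod_const]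
    exact prod_congr rfl fun j hj => by rw [if_pos (hgap j hj), hF i hi j hj]
  have htail : ∀ j ∈ Ioc (s k) N, (if j ∉ S then F j else 1) = 1 := fun j hj =>
    ite_eq_right_iff.2 fun _ => hF1 j (mem_Ioc.1 hj).1
  have h0k : s 0 ≤ s k := hs.monotoneOn (Set.mem_Iic.2 k.zero_le) (Set.mem_Iic.2 le_rfl) k.zero_le
  rw [sdiff_eq_filter, prod_filter, show Icc 1 N = Ioc (s 0) N by rw [hs0]; rfl,
    ← prod_Ioc_consecutive _ h0k hkN,
    prod_eq_one htail, mul_one, prod_Ioc_eq_prod_Icc_prod_Ioc hs.monotoneOn]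
  exact prod_congr rfl hblock

end StrictMonoOnIic

theorem step_bernoulli_average_general (N k : ℕ)
    (s : ℕ → ℕ) (hs0 : s 0 = 0) (hmono : ∀ i, i < k → s i < s (i + 1))
    (hrange : ∀ i, 1 ≤ i → i ≤ k → s i ∈ Finset.Icc 1 N)
    (ρ τ : ℂ) :
    ∑ Y ∈ (Finset.Icc 1 N).powerset.filter
        (fun Y => Finset.image s (Finset.Icc 1 k) ⊆ Y),
      ρ ^ Y.card * (1 - ρ) ^ (N - Y.card) *
        τ ^ (((Finset.image s (Finset.Icc 1 k)) ×ˢ Y).filter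
          (fun p => p.2 ≤ p.1)).card =
      τ ^ (k * (k + 1) / 2) * ρ ^ k *
        ∏ i ∈ Finset.Icc 1 k, (1 - ρ + τ ^ (k - i + 1) * ρ) ^ (s i - s (i - 1) - 1) := by
  have hs : StrictMonoOn s (Set.Iic k) :=
    strictMonoOn_Iic_of_lt_succ fun m hm => by simpa using hmono m hm
  set S := (Icc 1 k).image s
  have hSU : S ⊆ Icc 1 N :=
    image_subset_iff.2 fun i hi => hrange i (mem_Icc.1 hi).1 (mem_Icc.1 hi).2
  have hkN : s k ≤ N := by
    rcases k.eq_zero_or_pos with rfl | hk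
    · simp [hs0]
    · exact (mem_Icc.1 (hrange k hk le_rfl)).2
  rw [← Icc_eq_filter_powerset]
  calc _ = ∑ Y ∈ Icc S (Icc 1 N),
        (∏ v ∈ Y, ρ * τ ^ #{u ∈ S | v ≤ u}) * ∏ _v ∈ Icc 1 N \ Y, (1 - ρ) := by
        refine sum_congr rfl fun Y hY => ?_
        rw [card_filter_le_product_eq_sum, ← pow_card_mul_pow_card_sdiff_mul_pow_sum
          (mem_Icc.1 hY).2, Nat.card_Icc, Nat.add_sub_cancel]
    _ = (∏ v ∈ S, ρ * τ ^ #{u ∈ S | v ≤ u}) *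
        ∏ v ∈ Icc 1 N \ S, (ρ * τ ^ #{u ∈ S | v ≤ u} + (1 - ρ)) :=
      sum_Icc_prod_mul_prod_sdiff hSU _ _
    _ = _ := by
      rw [prod_image_mul_pow_card_filter_le hs, prod_Icc_sdiff_image_eq_prod_pow hs hs0 hkN]
      · intro i hi j hj
        rw [card_filter_image_le_of_mem_Ioc hs hi (Ioo_subset_Ioc_self hj)]
        ring
      · intro j hj
        rw [filter_image_le_eq_empty_of_lt hs.monotoneOn hj, card_empty]
        ring

/-- The step-Bernoulli average: for `S = {s_1 < ⋯ < s_k} ⊆ {1,…,N}` (with `s 0 = 0`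
and `t_i = s_i - s_{i-1} - 1`), and `σ(S,Y) = #{(u,v) ∈ S × Y : u ≥ v}`,
`∑_{S ⊆ Y ⊆ {1,…,N}} ρ^{|Y|}(1-ρ)^{N-|Y|} τ^{σ(S,Y)}
  = τ^{k(k+1)/2} ρ^k ∏_{i=1}^{k} (1 - ρ + τ^{k-i+1}ρ)^{t_i}`. -/
theorem step_bernoulli_average (N k : ℕ) (hN : 1 ≤ N) (hk : 1 ≤ k)
    (s : ℕ → ℕ) (hs0 : s 0 = 0) (hmono : ∀ i, i < k → s i < s (i + 1))
    (hrange : ∀ i, 1 ≤ i → i ≤ k → s i ∈ Finset.Icc 1 N)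
    (ρ τ : ℂ) :
    ∑ Y ∈ (Finset.Icc 1 N).powerset.filter
        (fun Y => Finset.image s (Finset.Icc 1 k) ⊆ Y),
      ρ ^ Y.card * (1 - ρ) ^ (N - Y.card) *
        τ ^ (((Finset.image s (Finset.Icc 1 k)) ×ˢ Y).filter
          (fun p => p.2 ≤ p.1)).card =
      τ ^ (k * (k + 1) / 2) * ρ ^ k *
        ∏ i ∈ Finset.Icc 1 k, (1 - ρ + τ ^ (k - i + 1) * ρ) ^ (s i - s (i - 1) - 1) :=
  step_bernoulli_average_general N k s hs0 hmono hrange ρ τ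
end

section
/- Let τ ∈ (0,1) and let μ ∈ ℂ with μ ≠ 0 and 1 - τ^k μ ≠ 0 for every integer k. Then for every z ∈ ℂ with 1 < |z| < τ^{-1}, the doubly infinite series f(μ,z) = ∑_{k ∈ ℤ} τ^k z^k / (1 - τ^k μ) converges absolutely; moreover, as z → 1 from above along the real axis, (1-z) f(μ,z) → 1/μ. In particular, f(μ,z) = μ^{-1}/(1-z) + O(1) as z → 1 with 1 < z < τ^{-1}: the function z ↦ f(μ,z) - μ^{-1}/(1-z) remains bounded on real z in an interval (1, 1+δ) for some δ > 0. -/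
/-!
For `k = n ≥ 0` the summand is `(τz)ⁿ / (1 - τⁿμ)`, and `(1 - τⁿμ)⁻¹ → 1` is bounded, so this
half converges geometrically for `|z| < τ⁻¹`. For `k = -m < 0` it is `z⁻ᵐ / (τᵐ - μ)`, and
`(τᵐ - μ)⁻¹ = -μ⁻¹ + τᵐ μ⁻¹ (τᵐ - μ)⁻¹` with `(τᵐ - μ)⁻¹ → -μ⁻¹` bounded: the first part sums to
the pole `μ⁻¹ / (1 - z)` for `|z| > 1`, the second is `O(τᵐ)` uniformly in `|z| ≥ 1`. So
`f(μ,z) - μ⁻¹/(1 - z)` is bounded on `1 < |z| ≤ r` for each `r < τ⁻¹`, which gives both the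
boundedness near `z = 1` and `(1 - z) f(μ,z) → μ⁻¹`.
-/

open Filter Topology

theorem summable_and_norm_tsum_le_of_norm_le_geometric {E : Type*} [NormedAddCommGroup E]
    [CompleteSpace E] {f : ℕ → E} {C q : ℝ} (hq0 : 0 ≤ q) (hq1 : q < 1)
    (hf : ∀ n, ‖f n‖ ≤ C * q ^ n) : Summable f ∧ ‖∑' n, f n‖ ≤ C * (1 - q)⁻¹ :=
  have hg := (hasSum_geometric_of_lt_one hq0 hq1).mul_left C
  ⟨.of_norm_bounded hg.summable hf, tsum_of_norm_bounded hg hf⟩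

theorem exists_forall_norm_inv_le_of_tendsto {𝕜 : Type*} [NormedField 𝕜] {u : ℕ → 𝕜} {a : 𝕜}
    (hu : Tendsto u atTop (𝓝 a)) (ha : a ≠ 0) : ∃ C, ∀ n, ‖(u n)⁻¹‖ ≤ C := by
  obtain ⟨C, hC⟩ :=
    isBounded_iff_forall_norm_le.1 (Metric.isBounded_range_of_tendsto _ (hu.inv₀ ha))
  exact ⟨C, fun n => hC _ ⟨n, rfl⟩⟩

theorem hasSum_inv_pow_succ {𝕜 : Type*} [NormedDivisionRing 𝕜] {z : 𝕜} (hz : 1 < ‖z‖) :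
    HasSum (fun n : ℕ => z⁻¹ ^ (n + 1)) (z - 1)⁻¹ := by
  have hz0 : z ≠ 0 := norm_pos_iff.1 (by linarith)
  have hzinv : ‖z⁻¹‖ < 1 := by rw [norm_inv]; exact inv_lt_one_of_one_lt₀ hz
  have hsum := (hasSum_geometric_of_norm_lt_one hzinv).mul_left z⁻¹
  rw [← mul_inv_rev, sub_mul, one_mul, inv_mul_cancel₀ hz0] at hsum
  exact hsum.congr_fun fun n => pow_succ' _ _

theorem inv_sub_eq_neg_inv_add {K : Type*} [Field K] {a μ : K} (hμ : μ ≠ 0) (ha : a - μ ≠ 0) :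
    (a - μ)⁻¹ = -μ⁻¹ + a * μ⁻¹ * (a - μ)⁻¹ := by
  field_simp
  ring

theorem exists_forall_norm_inv_one_sub_pow_mul_le {𝕜 : Type*} [NormedField 𝕜] {x : 𝕜}
    (hx : ‖x‖ < 1) (μ : 𝕜) : ∃ C, ∀ n : ℕ, ‖(1 - x ^ n * μ)⁻¹‖ ≤ C := by
  refine exists_forall_norm_inv_le_of_tendsto (a := 1) ?_ one_ne_zero
  simpa using tendsto_const_nhds.sub ((tendsto_pow_atTop_nhds_zero_of_norm_lt_one hx).mul_const μ)

theorem exists_forall_norm_inv_pow_sub_le {𝕜 : Type*} [NormedField 𝕜] {x μ : 𝕜} (hx : ‖x‖ < 1)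
    (hμ : μ ≠ 0) : ∃ C, ∀ n : ℕ, ‖(x ^ n - μ)⁻¹‖ ≤ C := by
  refine exists_forall_norm_inv_le_of_tendsto (a := -μ) ?_ (neg_ne_zero.2 hμ)
  simpa using (tendsto_pow_atTop_nhds_zero_of_norm_lt_one hx).sub_const μ

namespace DeformedGeometricKernel

variable {τ : ℝ} {μ z : ℂ}

noncomputable def kernelTerm (τ : ℝ) (μ z : ℂ) (k : ℤ) : ℂ :=
  (τ : ℂ) ^ k * z ^ k / (1 - (τ : ℂ) ^ k * μ)

theorem kernelTerm_natCast (n : ℕ) :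
    kernelTerm τ μ z n = (τ * z) ^ n * (1 - (τ : ℂ) ^ n * μ)⁻¹ := by
  simp only [kernelTerm, zpow_natCast, mul_pow, div_eq_mul_inv]

theorem kernelTerm_neg_natCast_add_one (hτ : τ ≠ 0) (n : ℕ) :
    kernelTerm τ μ z (-(n + 1)) = z⁻¹ ^ (n + 1) * ((τ : ℂ) ^ (n + 1) - μ)⁻¹ := by
  have ha : (τ : ℂ) ^ (n + 1) ≠ 0 := pow_ne_zero _ (Complex.ofReal_ne_zero.2 hτ)
  have hcast : -((n : ℤ) + 1) = -((n + 1 : ℕ) : ℤ) := by push_cast; rfl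
  rw [kernelTerm, hcast, zpow_neg, zpow_neg, zpow_natCast, zpow_natCast,
    show 1 - ((τ : ℂ) ^ (n + 1))⁻¹ * μ = ((τ : ℂ) ^ (n + 1))⁻¹ * ((τ : ℂ) ^ (n + 1) - μ) by
      field_simp,
    mul_div_mul_left _ _ (inv_ne_zero ha), div_eq_mul_inv, inv_pow]

theorem norm_ofReal_lt_one (hτ0 : 0 ≤ τ) (hτ1 : τ < 1) : ‖(τ : ℂ)‖ < 1 := by
  rwa [Complex.norm_real, Real.norm_of_nonneg hτ0]

theorem norm_kernelTerm_natCast_le {C : ℝ} (hC : ∀ n : ℕ, ‖(1 - (τ : ℂ) ^ n * μ)⁻¹‖ ≤ C)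
    (hτ0 : 0 ≤ τ) (n : ℕ) : ‖kernelTerm τ μ z n‖ ≤ C * (τ * ‖z‖) ^ n := by
  rw [kernelTerm_natCast, norm_mul, norm_pow, norm_mul, Complex.norm_real,
    Real.norm_of_nonneg hτ0, mul_comm]
  gcongr
  exact hC n

theorem norm_kernelTerm_neg_natCast_add_one_le {C : ℝ}
    (hC : ∀ n : ℕ, ‖((τ : ℂ) ^ n - μ)⁻¹‖ ≤ C) (hτ : τ ≠ 0) (n : ℕ) :
    ‖kernelTerm τ μ z (-(n + 1))‖ ≤ C * ‖z⁻¹‖ * ‖z⁻¹‖ ^ n := by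
  rw [kernelTerm_neg_natCast_add_one hτ, norm_mul, norm_pow, pow_succ, mul_comm, mul_assoc,
    mul_comm ‖z⁻¹‖]
  gcongr
  exact hC (n + 1)

theorem summable_norm_kernelTerm (hτ0 : 0 < τ) (hτ1 : τ < 1) (hμ : μ ≠ 0) (hz1 : 1 < ‖z‖)
    (hz2 : ‖z‖ < τ⁻¹) : Summable fun k => ‖kernelTerm τ μ z k‖ := by
  obtain ⟨C₁, hC₁⟩ := exists_forall_norm_inv_one_sub_pow_mul_le (norm_ofReal_lt_one hτ0.le hτ1) μ
  obtain ⟨C₂, hC₂⟩ := exists_forall_norm_inv_pow_sub_le (norm_ofReal_lt_one hτ0.le hτ1) hμ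
  have hτz : τ * ‖z‖ < 1 := by rwa [← lt_inv_mul_iff₀ hτ0, mul_one]
  have hzinv : ‖z⁻¹‖ < 1 := by rw [norm_inv]; exact inv_lt_one_of_one_lt₀ hz1
  refine .of_nat_of_neg_add_one ?_ ?_
  · exact (summable_and_norm_tsum_le_of_norm_le_geometric (by positivity) hτz fun n =>
      (norm_norm _).trans_le (norm_kernelTerm_natCast_le hC₁ hτ0.le n)).1
  · exact (summable_and_norm_tsum_le_of_norm_le_geometric (norm_nonneg _) hzinv fun n =>
      (norm_norm _).trans_le (norm_kernelTerm_neg_natCast_add_one_le hC₂ hτ0.ne' n)).1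

theorem pow_sub_ne_zero (hτ : τ ≠ 0) (h : ∀ k : ℤ, 1 - (τ : ℂ) ^ k * μ ≠ 0) (n : ℕ) :
    (τ : ℂ) ^ n - μ ≠ 0 := by
  rw [sub_ne_zero]
  intro hμ
  apply h (-n)
  rw [zpow_neg, zpow_natCast, ← hμ, inv_mul_cancel₀ (pow_ne_zero _ (by exact_mod_cast hτ)),
    sub_self]

theorem hasSum_kernelTerm_neg_natCast_add_one (hτ0 : 0 < τ) (hτ1 : τ < 1) (hμ : μ ≠ 0)
    (h : ∀ k : ℤ, 1 - (τ : ℂ) ^ k * μ ≠ 0) {C : ℝ} (hC : ∀ n : ℕ, ‖((τ : ℂ) ^ n - μ)⁻¹‖ ≤ C)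
    (hz : 1 < ‖z‖) : ∃ Q : ℂ, ‖Q‖ ≤ C * ‖μ‖⁻¹ * τ * (1 - τ)⁻¹ ∧
      HasSum (fun n : ℕ => kernelTerm τ μ z (-(n + 1))) (-μ⁻¹ * (z - 1)⁻¹ + Q) := by
  set q : ℕ → ℂ := fun n => z⁻¹ ^ (n + 1) * ((τ : ℂ) ^ (n + 1) * μ⁻¹ * ((τ : ℂ) ^ (n + 1) - μ)⁻¹)
  obtain ⟨hqs, hq⟩ := summable_and_norm_tsum_le_of_norm_le_geometric (f := q)
    (C := C * ‖μ‖⁻¹ * τ) hτ0.le hτ1 fun n =>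
      calc ‖q n‖ = ‖z‖⁻¹ ^ (n + 1) * (τ ^ (n + 1) * ‖μ‖⁻¹ * ‖((τ : ℂ) ^ (n + 1) - μ)⁻¹‖) := by
            simp only [q, norm_mul, norm_pow, norm_inv, Complex.norm_real,
              Real.norm_of_nonneg hτ0.le]
        _ ≤ 1 * (τ ^ (n + 1) * ‖μ‖⁻¹ * C) := by
            gcongr
            · exact pow_le_one₀ (by positivity) (inv_le_one_of_one_le₀ hz.le)
            · exact hC _
        _ = C * ‖μ‖⁻¹ * τ * τ ^ n := by ring
  refine ⟨∑' n, q n, hq, ?_⟩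
  refine (((hasSum_inv_pow_succ hz).mul_left (-μ⁻¹)).add hqs.hasSum).congr_fun fun n => ?_
  rw [kernelTerm_neg_natCast_add_one hτ0.ne',
    inv_sub_eq_neg_inv_add hμ (pow_sub_ne_zero hτ0.ne' h (n + 1))]
  simp only [q]
  ring

theorem norm_tsum_kernelTerm_sub_le (hτ0 : 0 < τ) (hτ1 : τ < 1) (hμ : μ ≠ 0)
    (h : ∀ k : ℤ, 1 - (τ : ℂ) ^ k * μ ≠ 0) {C₁ C₂ r : ℝ}
    (hC₁ : ∀ n : ℕ, ‖(1 - (τ : ℂ) ^ n * μ)⁻¹‖ ≤ C₁) (hC₂ : ∀ n : ℕ, ‖((τ : ℂ) ^ n - μ)⁻¹‖ ≤ C₂)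
    (hr : τ * r < 1) (hz1 : 1 < ‖z‖) (hzr : ‖z‖ ≤ r) :
    ‖∑' k, kernelTerm τ μ z k - μ⁻¹ / (1 - z)‖ ≤
      C₁ * (1 - τ * r)⁻¹ + C₂ * ‖μ‖⁻¹ * τ * (1 - τ)⁻¹ := by
  obtain ⟨hPs, hP⟩ := summable_and_norm_tsum_le_of_norm_le_geometric
    (mul_nonneg hτ0.le (by linarith)) hr fun n =>
      (norm_kernelTerm_natCast_le (z := z) hC₁ hτ0.le n).trans
        (by gcongr; exact (norm_nonneg _).trans (hC₁ 0))
  obtain ⟨Q, hQ, hneg⟩ := hasSum_kernelTerm_neg_natCast_add_one hτ0 hτ1 hμ h hC₂ hz1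
  have hprincipal : -μ⁻¹ * (z - 1)⁻¹ = μ⁻¹ / (1 - z) := by
    rw [div_eq_mul_inv, ← neg_sub z 1, inv_neg, mul_neg, neg_mul]
  rw [(hPs.hasSum.of_nat_of_neg_add_one hneg).tsum_eq, hprincipal, add_left_comm,
    add_sub_cancel_left]
  exact (norm_add_le _ _).trans (add_le_add hP hQ)

theorem exists_norm_tsum_kernelTerm_sub_le (hτ0 : 0 < τ) (hτ1 : τ < 1) (hμ : μ ≠ 0)
    (h : ∀ k : ℤ, 1 - (τ : ℂ) ^ k * μ ≠ 0) {r : ℝ} (hr : τ * r < 1) :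
    ∃ M, ∀ z : ℂ, 1 < ‖z‖ → ‖z‖ ≤ r → ‖∑' k, kernelTerm τ μ z k - μ⁻¹ / (1 - z)‖ ≤ M := by
  obtain ⟨C₁, hC₁⟩ := exists_forall_norm_inv_one_sub_pow_mul_le (norm_ofReal_lt_one hτ0.le hτ1) μ
  obtain ⟨C₂, hC₂⟩ := exists_forall_norm_inv_pow_sub_le (norm_ofReal_lt_one hτ0.le hτ1) hμ
  exact ⟨_, fun z => norm_tsum_kernelTerm_sub_le hτ0 hτ1 hμ h hC₁ hC₂ hr⟩

end DeformedGeometricKernel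

theorem tendsto_one_sub_mul_of_norm_sub_div_le {g : ℝ → ℂ} {c : ℂ} {M : ℝ}
    (hg : ∀ᶠ x in 𝓝[>] 1, ‖g x - c / (1 - x)‖ ≤ M) :
    Tendsto (fun x : ℝ => (1 - (x : ℂ)) * g x) (𝓝[>] 1) (𝓝 c) := by
  rw [← tendsto_sub_nhds_zero_iff]
  refine squeeze_zero_norm' (a := fun x : ℝ => ‖1 - (x : ℂ)‖ * M) ?_ ?_
  · filter_upwards [hg, self_mem_nhdsWithin] with x hx hx1
    have hx1' : 1 - (x : ℂ) ≠ 0 := sub_ne_zero.2 (by exact_mod_cast (ne_of_lt hx1))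
    rw [show (1 - (x : ℂ)) * g x - c = (1 - x) * (g x - c / (1 - x)) by field_simp, norm_mul]
    gcongr
  · have hcont : Continuous fun x : ℝ => ‖1 - (x : ℂ)‖ * M := by fun_prop
    simpa using (hcont.tendsto 1).mono_left nhdsWithin_le_nhds

open DeformedGeometricKernel in
/-- The deformed geometric kernel `f(μ,z) = ∑_{k ∈ ℤ} τ^k z^k / (1 - τ^k μ)`: for
`τ ∈ (0,1)`, `μ ≠ 0` with `1 - τ^k μ ≠ 0` for all `k ∈ ℤ`, the series converges
absolutely for `1 < |z| < τ⁻¹`; as `z → 1⁺` along the real axis,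
`(1-z) f(μ,z) → 1/μ`; and `f(μ,z) - μ⁻¹/(1-z)` stays bounded for real
`z ∈ (1, 1+δ)` for some `δ > 0`. -/
theorem deformed_geometric_kernel (τ : ℝ) (hτ0 : 0 < τ) (hτ1 : τ < 1)
    (μ : ℂ) (hμ : μ ≠ 0) (h : ∀ k : ℤ, 1 - (τ : ℂ) ^ k * μ ≠ 0) :
    (∀ z : ℂ, 1 < ‖z‖ → ‖z‖ < τ⁻¹ →
      Summable (fun k : ℤ => ‖(τ : ℂ) ^ k * z ^ k / (1 - (τ : ℂ) ^ k * μ)‖)) ∧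
    Filter.Tendsto
      (fun z : ℝ =>
        (1 - (z : ℂ)) * ∑' k : ℤ, (τ : ℂ) ^ k * (z : ℂ) ^ k / (1 - (τ : ℂ) ^ k * μ))
      (nhdsWithin 1 (Set.Ioi 1)) (nhds μ⁻¹) ∧
    ∃ δ > 0, ∃ M : ℝ, ∀ z : ℝ, 1 < z → z < 1 + δ →
      ‖(∑' k : ℤ, (τ : ℂ) ^ k * (z : ℂ) ^ k / (1 - (τ : ℂ) ^ k * μ)) -
          μ⁻¹ / (1 - (z : ℂ))‖ ≤ M := by
  obtain ⟨r, hr1, hrτ⟩ := exists_between ((one_lt_inv₀ hτ0).2 hτ1)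
  obtain ⟨M, hM⟩ := exists_norm_tsum_kernelTerm_sub_le hτ0 hτ1 hμ h
    (show τ * r < 1 by rwa [← lt_inv_mul_iff₀ hτ0, mul_one])
  have hbound (x : ℝ) (hx1 : 1 < x) (hxr : x < r) :
      ‖∑' k, kernelTerm τ μ x k - μ⁻¹ / (1 - x)‖ ≤ M := by
    have hx : ‖(x : ℂ)‖ = x := by rw [Complex.norm_real, Real.norm_of_nonneg (by linarith)]
    exact hM x (by rwa [hx]) (by rw [hx]; exact hxr.le)
  refine ⟨fun z hz1 hz2 => summable_norm_kernelTerm hτ0 hτ1 hμ hz1 hz2,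
    tendsto_one_sub_mul_of_norm_sub_div_le (M := M) ?_, r - 1, by linarith, M,
    fun x hx1 hx2 => hbound x hx1 (by linarith)⟩
  filter_upwards [Ioo_mem_nhdsGT hr1] with x hx using hbound x hx.1 hx.2
end
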